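/- Uniqueness of very weak solutions (mild form): in the setting below, let (B_ε)_{ε∈(0,1]} and (B̃_ε)_{ε∈(0,1]} be bounded linear operators on E such that ‖B_ε‖ ≤ N_q log(1/ε) for some N_q > 0, and such that the difference is negligible: for every n ∈ ℕ there exists c > 0 with ‖B_ε − B̃_ε‖ ≤ c ε^n for all ε ∈ (0,1]. Let u_ε and ũ_ε be continuous mild solutions on [0,T] with potentials B_ε and B̃_ε respectively (with the same (T_s), f and g), and assume the net (ũ_ε) is moderate: there exist C₁ > 0 and N ∈ ℕ with sup_{t∈[0,T]} ‖ũ_ε(t)‖ ≤ C₁ ε^{-N} for all ε. Then for every k ∈ ℕ there exists C > 0 such that sup_{t ∈ [0,T]} ‖u_ε(t) − ũ_ε(t)‖_E ≤ C ε^k for all ε ∈ (0,1]. -/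

import Mathlib

/-!
The difference `v = u_ε - ũ_ε` of two mild solutions is again a Duhamel integral, with integrand
`T_{t-s}((B̃_ε - B_ε) ũ_ε(s) - B_ε v(s))`. If `K` bounds `‖T_s‖` on `[0, T]` and `R` bounds `ũ_ε`,
this gives `‖v(t)‖ ≤ K ‖B_ε - B̃_ε‖ R t + K ‖B_ε‖ ∫₀ᵗ ‖v‖`, and Grönwall's inequality yields
`‖v(t)‖ ≤ K ‖B_ε - B̃_ε‖ R T exp (K ‖B_ε‖ T)`. The log-type bound on `B_ε` turns the exponential
into a fixed power `ε^(-m)`, which is absorbed, together with `R ≤ C₁ ε^(-N)`, by choosing the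
negligibility exponent of `B_ε - B̃_ε` to be `k + N + m`.
-/

open Set MeasureTheory Real

theorem add_mul_gronwallBound_zero (L a x : ℝ) :
    a + L * gronwallBound 0 L a x = a * exp (L * x) := by
  rcases eq_or_ne L 0 with rfl | hL
  · simp [gronwallBound_K0]
  · rw [gronwallBound_of_K_ne_0 hL]
    field_simp
    ring

theorem le_mul_exp_of_le_add_mul_integral {φ : ℝ → ℝ} {a L t : ℝ} (ht : 0 ≤ t) (hL : 0 ≤ L)
    (hφ : ContinuousOn φ (Icc 0 t)) (h : ∀ s ∈ Icc 0 t, φ s ≤ a + L * ∫ r in 0..s, φ r) :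
    φ t ≤ a * exp (L * t) := by
  -- Differential Grönwall for the primitive of `φ`, extended continuously to all of `ℝ`.
  set ψ : ℝ → ℝ := fun s => φ (projIcc 0 t ht s)
  have hψ : Continuous ψ :=
    hφ.comp_continuous (continuous_subtype_val.comp continuous_projIcc) fun s =>
      (projIcc 0 t ht s).2
  have hψφ : EqOn ψ φ (Icc 0 t) := fun s hs => by simp [ψ, projIcc_of_mem ht hs]
  set F : ℝ → ℝ := fun s => ∫ r in 0..s, ψ r
  have hFφ : ∀ s ∈ Icc 0 t, F s = ∫ r in 0..s, φ r := fun s hs =>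
    intervalIntegral.integral_congr <| hψφ.mono <| by
      rw [uIcc_of_le hs.1]; exact Icc_subset_Icc_right hs.2
  have hF : ∀ s, HasDerivAt F (ψ s) s := fun s => (hψ.integral_hasStrictDerivAt 0 s).hasDerivAt
  have hF_le : ∀ s ∈ Icc 0 t, F s ≤ gronwallBound 0 L a (s - 0) :=
    le_gronwallBound_of_liminf_deriv_right_le (fun s _ => (hF s).continuousAt.continuousWithinAt)
      (fun s _ r hr => (hF s).hasDerivWithinAt.liminf_right_slope_le hr) (by simp [F])
      fun s hs => by
        have hs' := Ico_subset_Icc_self hs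
        rw [hψφ hs', hFφ s hs']
        linarith [h s hs']
  have ht' : t ∈ Icc 0 t := right_mem_Icc.2 ht
  calc φ t ≤ a + L * F t := hFφ t ht' ▸ h t ht'
    _ ≤ a + L * gronwallBound 0 L a t := by
      gcongr; simpa using hF_le t ht'
    _ = a * exp (L * t) := add_mul_gronwallBound_zero L a t

theorem ContinuousOn.clm_apply_of_norm_le {X 𝕜 E F : Type*} [TopologicalSpace X]
    [NontriviallyNormedField 𝕜] [NormedAddCommGroup E] [NormedSpace 𝕜 E]
    [NormedAddCommGroup F] [NormedSpace 𝕜 F] {A : X → E →L[𝕜] F} {c : X → E} {s : Set X}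
    {K : ℝ} (hA : ∀ x, ContinuousOn (fun y => A y x) s) (hK : ∀ y ∈ s, ‖A y‖ ≤ K)
    (hc : ContinuousOn c s) : ContinuousOn (fun y => A y (c y)) s := by
  intro y₀ hy₀
  have hsmall : Filter.Tendsto (fun y => A y (c y - c y₀)) (nhdsWithin y₀ s) (nhds 0) := by
    refine squeeze_zero_norm' ?_
      (by simpa using ((hc y₀ hy₀).sub_const (c y₀)).norm.const_mul K)
    filter_upwards [self_mem_nhdsWithin] with y hy
    exact (A y).le_of_opNorm_le (hK y hy) _
  have hsplit : (fun y => A y (c y)) = fun y => A y (c y - c y₀) + A y (c y₀) := by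
    funext y; rw [← map_add, sub_add_cancel]
  rw [ContinuousWithinAt, hsplit]
  simpa using hsmall.add (hA (c y₀) y₀ hy₀)

section MildSolution

variable {E : Type*} [NormedAddCommGroup E] [NormedSpace ℝ E]

def IsMildSolution (Tt : ℝ → E →L[ℝ] E) (T : ℝ) (B : E →L[ℝ] E) (f : ℝ → E) (g : E)
    (u : ℝ → E) : Prop :=
  ContinuousOn u (Icc 0 T) ∧
    ∀ t ∈ Icc 0 T, u t = Tt t g + ∫ s in 0..t, Tt (t - s) (f s - B (u s))

variable {Tt : ℝ → E →L[ℝ] E} {T K : ℝ} {f : ℝ → E} {g : E}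

theorem continuousOn_semigroup_convolution_integrand
    (hTcont : ∀ x, ContinuousOn (fun s => Tt s x) (Icc 0 T))
    (hK : ∀ s ∈ Icc 0 T, ‖Tt s‖ ≤ K) {t : ℝ} (ht : t ≤ T) {c : ℝ → E}
    (hc : ContinuousOn c (Icc 0 t)) : ContinuousOn (fun s => Tt (t - s) (c s)) (Icc 0 t) := by
  have hmaps : MapsTo (fun s => t - s) (Icc 0 t) (Icc 0 T) := fun s hs =>
    ⟨sub_nonneg.2 hs.2, by linarith [hs.1]⟩
  exact ContinuousOn.clm_apply_of_norm_le
    (fun x => (hTcont x).comp (continuousOn_const.sub continuousOn_id) hmaps)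
    (fun s hs => hK _ (hmaps hs)) hc

variable {B B' : E →L[ℝ] E} {u u' : ℝ → E}

theorem IsMildSolution.sub_eq_integral (hTcont : ∀ x, ContinuousOn (fun s => Tt s x) (Icc 0 T))
    (hK : ∀ s ∈ Icc 0 T, ‖Tt s‖ ≤ K) (hf : ContinuousOn f (Icc 0 T))
    (hu : IsMildSolution Tt T B f g u) (hu' : IsMildSolution Tt T B' f g u') {t : ℝ}
    (ht : t ∈ Icc 0 T) :
    u t - u' t = ∫ s in 0..t, Tt (t - s) ((B' - B) (u' s) - B (u s - u' s)) := by
  have hsub : Icc 0 t ⊆ Icc 0 T := Icc_subset_Icc_right ht.2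
  have hint : ∀ {B₀ : E →L[ℝ] E} {v : ℝ → E}, ContinuousOn v (Icc 0 T) →
      IntervalIntegrable (fun s => Tt (t - s) (f s - B₀ (v s))) volume 0 t := fun hv =>
    (continuousOn_semigroup_convolution_integrand hTcont hK ht.2 ((hf.mono hsub).sub
      (map_continuous _ |>.comp_continuousOn (hv.mono hsub)))).intervalIntegrable_of_Icc ht.1
  rw [hu.2 t ht, hu'.2 t ht, add_sub_add_left_eq_sub,
    ← intervalIntegral.integral_sub (hint hu.1) (hint hu'.1)]
  congr 1 with s
  rw [← map_sub]
  congr 1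
  simp only [sub_apply, map_sub]
  abel

theorem IsMildSolution.norm_sub_le_integral
    (hTcont : ∀ x, ContinuousOn (fun s => Tt s x) (Icc 0 T))
    (hK : ∀ s ∈ Icc 0 T, ‖Tt s‖ ≤ K) (hf : ContinuousOn f (Icc 0 T))
    (hu : IsMildSolution Tt T B f g u) (hu' : IsMildSolution Tt T B' f g u') {R : ℝ}
    (hR : ∀ s ∈ Icc 0 T, ‖u' s‖ ≤ R) {t : ℝ} (ht : t ∈ Icc 0 T) :
    ‖u t - u' t‖ ≤ K * ‖B - B'‖ * R * t + K * ‖B‖ * ∫ s in 0..t, ‖u s - u' s‖ := by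
  have hsub : Icc 0 t ⊆ Icc 0 T := Icc_subset_Icc_right ht.2
  have hK0 : 0 ≤ K := (norm_nonneg _).trans (hK 0 (left_mem_Icc.2 (ht.1.trans ht.2)))
  have hnorm : ContinuousOn (fun s => ‖u s - u' s‖) (Icc 0 t) :=
    ((hu.1.fun_sub hu'.1).mono hsub).norm
  have hint : IntervalIntegrable (fun s => K * ‖B‖ * ‖u s - u' s‖) volume 0 t :=
    (continuousOn_const.mul hnorm).intervalIntegrable_of_Icc ht.1
  have hbound : ∀ s ∈ Ioc 0 t, ‖Tt (t - s) ((B' - B) (u' s) - B (u s - u' s))‖ ≤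
      K * ‖B - B'‖ * R + K * ‖B‖ * ‖u s - u' s‖ := by
    intro s hs
    have hts : t - s ∈ Icc 0 T := ⟨sub_nonneg.2 hs.2, by linarith [hs.1, ht.2]⟩
    calc ‖Tt (t - s) ((B' - B) (u' s) - B (u s - u' s))‖
        ≤ K * (‖B' - B‖ * ‖u' s‖ + ‖B‖ * ‖u s - u' s‖) := by
          refine (Tt (t - s)).le_of_opNorm_le (hK _ hts) _ |>.trans ?_
          gcongr
          exact (norm_sub_le _ _).trans (add_le_add ((B' - B).le_opNorm _) (B.le_opNorm _))
      _ ≤ K * (‖B - B'‖ * R + ‖B‖ * ‖u s - u' s‖) := by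
          rw [norm_sub_rev B']
          gcongr
          exact hR s (hsub (Ioc_subset_Icc_self hs))
      _ = K * ‖B - B'‖ * R + K * ‖B‖ * ‖u s - u' s‖ := by ring
  rw [hu.sub_eq_integral hTcont hK hf hu' ht]
  refine (intervalIntegral.norm_integral_le_of_norm_le ht.1 (Filter.Eventually.of_forall hbound)
    (intervalIntegrable_const.add hint)).trans_eq ?_
  rw [intervalIntegral.integral_add intervalIntegrable_const hint,
    intervalIntegral.integral_const, intervalIntegral.integral_const_mul, smul_eq_mul, sub_zero,
    mul_comm t]

theorem IsMildSolution.norm_sub_le (hTcont : ∀ x, ContinuousOn (fun s => Tt s x) (Icc 0 T))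
    (hK : ∀ s ∈ Icc 0 T, ‖Tt s‖ ≤ K) (hf : ContinuousOn f (Icc 0 T))
    (hu : IsMildSolution Tt T B f g u) (hu' : IsMildSolution Tt T B' f g u') {R : ℝ}
    (hR : ∀ s ∈ Icc 0 T, ‖u' s‖ ≤ R) {t : ℝ} (ht : t ∈ Icc 0 T) :
    ‖u t - u' t‖ ≤ K * ‖B - B'‖ * R * t * exp (K * ‖B‖ * t) := by
  have hK0 : 0 ≤ K := (norm_nonneg _).trans (hK 0 (left_mem_Icc.2 (ht.1.trans ht.2)))
  have hR0 : 0 ≤ R := (norm_nonneg _).trans (hR 0 (left_mem_Icc.2 (ht.1.trans ht.2)))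
  refine le_mul_exp_of_le_add_mul_integral ht.1 (by positivity)
    ((hu.1.fun_sub hu'.1).mono (Icc_subset_Icc_right ht.2)).norm fun τ hτ => ?_
  have hτ' : τ ∈ Icc 0 T := ⟨hτ.1, hτ.2.trans ht.2⟩
  have : K * ‖B - B'‖ * R * τ ≤ K * ‖B - B'‖ * R * t := by gcongr; exact hτ.2
  linarith [hu.norm_sub_le_integral hTcont hK hf hu' hR hτ']

end MildSolution

theorem exp_le_inv_pow_of_le_nat_mul_log {x ε : ℝ} {m : ℕ} (hε : 0 < ε)
    (hx : x ≤ m * log (1 / ε)) : exp x ≤ (ε ^ m)⁻¹ := by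
  calc exp x ≤ exp (m * log (1 / ε)) := exp_le_exp.2 hx
    _ = (ε ^ m)⁻¹ := by rw [exp_nat_mul, exp_log (by positivity), one_div, inv_pow]

theorem very_weak_solution_unique_general
    {E : Type*} [NormedAddCommGroup E] [NormedSpace ℝ E]
    (T : ℝ) (hT : 0 < T) (M w : ℝ) (hM : 0 < M) (hw : 0 ≤ w)
    (Tt : ℝ → E →L[ℝ] E)
    (hTcont : ∀ x : E, ContinuousOn (fun s => Tt s x) (Icc 0 T))
    (hTbound : ∀ s ∈ Icc (0 : ℝ) T, ‖Tt s‖ ≤ M * Real.exp (w * s))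
    (g : E) (f : ℝ → E) (hf : ContinuousOn f (Icc 0 T))
    (Bε B'ε : ℝ → E →L[ℝ] E) (Nq : ℝ)
    (hBlog : ∀ ε ∈ Ioc (0 : ℝ) 1, ‖Bε ε‖ ≤ Nq * Real.log (1 / ε))
    (hBneg : ∀ n : ℕ, ∃ c > (0 : ℝ), ∀ ε ∈ Ioc (0 : ℝ) 1,
      ‖Bε ε - B'ε ε‖ ≤ c * ε ^ n)
    (uε u'ε : ℝ → ℝ → E)
    (huc : ∀ ε ∈ Ioc (0 : ℝ) 1, ContinuousOn (uε ε) (Icc 0 T))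
    (humild : ∀ ε ∈ Ioc (0 : ℝ) 1, ∀ t ∈ Icc (0 : ℝ) T,
      uε ε t = Tt t g + ∫ s in (0 : ℝ)..t, Tt (t - s) (f s - Bε ε (uε ε s)))
    (hu'c : ∀ ε ∈ Ioc (0 : ℝ) 1, ContinuousOn (u'ε ε) (Icc 0 T))
    (hu'mild : ∀ ε ∈ Ioc (0 : ℝ) 1, ∀ t ∈ Icc (0 : ℝ) T,
      u'ε ε t = Tt t g + ∫ s in (0 : ℝ)..t, Tt (t - s) (f s - B'ε ε (u'ε ε s)))
    (C₁ : ℝ) (hC₁ : 0 < C₁) (N : ℕ)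
    (hu'mod : ∀ ε ∈ Ioc (0 : ℝ) 1, ∀ t ∈ Icc (0 : ℝ) T,
      ‖u'ε ε t‖ ≤ C₁ * (ε ^ N)⁻¹) :
    ∀ k : ℕ, ∃ C > (0 : ℝ), ∀ ε ∈ Ioc (0 : ℝ) 1, ∀ t ∈ Icc (0 : ℝ) T,
      ‖uε ε t - u'ε ε t‖ ≤ C * ε ^ k := by
  intro k
  obtain ⟨K, hK0, hK⟩ : ∃ K > 0, ∀ s ∈ Icc 0 T, ‖Tt s‖ ≤ K :=
    ⟨M * exp (w * T), by positivity, fun s hs => (hTbound s hs).trans (by gcongr; exact hs.2)⟩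
  obtain ⟨m, hm⟩ := exists_nat_ge (K * Nq * T)
  obtain ⟨c, hc, hcB⟩ := hBneg (k + N + m)
  refine ⟨K * c * C₁ * T, by positivity, fun ε hε t ht => ?_⟩
  have hε0 : 0 < ε := hε.1
  have hlog : 0 ≤ log (1 / ε) := log_nonneg (one_le_one_div hε0 hε.2)
  have hexp : exp (K * ‖Bε ε‖ * t) ≤ (ε ^ m)⁻¹ := by
    refine exp_le_inv_pow_of_le_nat_mul_log hε0 ?_
    calc K * ‖Bε ε‖ * t ≤ K * (Nq * log (1 / ε)) * T :=
          mul_le_mul (by gcongr; exact hBlog ε hε) ht.2 ht.1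
            (mul_nonneg hK0.le ((norm_nonneg _).trans (hBlog ε hε)))
      _ = K * Nq * T * log (1 / ε) := by ring
      _ ≤ m * log (1 / ε) := by gcongr
  calc ‖uε ε t - u'ε ε t‖
      ≤ K * ‖Bε ε - B'ε ε‖ * (C₁ * (ε ^ N)⁻¹) * t * exp (K * ‖Bε ε‖ * t) :=
        IsMildSolution.norm_sub_le hTcont hK hf ⟨huc ε hε, humild ε hε⟩
          ⟨hu'c ε hε, hu'mild ε hε⟩ (hu'mod ε hε) ht
    _ ≤ K * (c * ε ^ (k + N + m)) * (C₁ * (ε ^ N)⁻¹) * T * (ε ^ m)⁻¹ := by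
        gcongr
        exacts [ht.1, hcB ε hε, ht.2]
    _ = K * c * C₁ * T * ε ^ k := by
        field_simp
        ring

/-- uniqueness of very weak solutions (mild form): if two nets of
potentials `B_ε`, `B̃_ε` are of log-type and their difference is negligible,
`u_ε`, `ũ_ε` are corresponding continuous mild solutions (same `T_s`, `f`, `g`) and
`(ũ_ε)` is moderate, then the difference `u_ε − ũ_ε` is negligible:
for every `k ∈ ℕ` there is `C > 0` with `sup_{t∈[0,T]} ‖u_ε(t) − ũ_ε(t)‖ ≤ C ε^k`. -/
theorem very_weak_solution_unique
    {E : Type*} [NormedAddCommGroup E] [NormedSpace ℝ E] [CompleteSpace E]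
    (T : ℝ) (hT : 0 < T) (M w : ℝ) (hM : 0 < M) (hw : 0 ≤ w)
    (Tt : ℝ → E →L[ℝ] E)
    (hTcont : ∀ x : E, ContinuousOn (fun s => Tt s x) (Icc 0 T))
    (hTbound : ∀ s ∈ Icc (0 : ℝ) T, ‖Tt s‖ ≤ M * Real.exp (w * s))
    (g : E) (f : ℝ → E) (hf : ContinuousOn f (Icc 0 T))
    (Bε B'ε : ℝ → E →L[ℝ] E) (Nq : ℝ) (hNq : 0 < Nq)
    (hBlog : ∀ ε ∈ Ioc (0 : ℝ) 1, ‖Bε ε‖ ≤ Nq * Real.log (1 / ε))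
    (hBneg : ∀ n : ℕ, ∃ c > (0 : ℝ), ∀ ε ∈ Ioc (0 : ℝ) 1,
      ‖Bε ε - B'ε ε‖ ≤ c * ε ^ n)
    (uε u'ε : ℝ → ℝ → E)
    (huc : ∀ ε ∈ Ioc (0 : ℝ) 1, ContinuousOn (uε ε) (Icc 0 T))
    (humild : ∀ ε ∈ Ioc (0 : ℝ) 1, ∀ t ∈ Icc (0 : ℝ) T,
      uε ε t = Tt t g + ∫ s in (0 : ℝ)..t, Tt (t - s) (f s - Bε ε (uε ε s)))
    (hu'c : ∀ ε ∈ Ioc (0 : ℝ) 1, ContinuousOn (u'ε ε) (Icc 0 T))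
    (hu'mild : ∀ ε ∈ Ioc (0 : ℝ) 1, ∀ t ∈ Icc (0 : ℝ) T,
      u'ε ε t = Tt t g + ∫ s in (0 : ℝ)..t, Tt (t - s) (f s - B'ε ε (u'ε ε s)))
    (C₁ : ℝ) (hC₁ : 0 < C₁) (N : ℕ)
    (hu'mod : ∀ ε ∈ Ioc (0 : ℝ) 1, ∀ t ∈ Icc (0 : ℝ) T,
      ‖u'ε ε t‖ ≤ C₁ * (ε ^ N)⁻¹) :
    ∀ k : ℕ, ∃ C > (0 : ℝ), ∀ ε ∈ Ioc (0 : ℝ) 1, ∀ t ∈ Icc (0 : ℝ) T,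
      ‖uε ε t - u'ε ε t‖ ≤ C * ε ^ k :=
  very_weak_solution_unique_general T hT M w hM hw Tt hTcont hTbound g f hf Bε B'ε Nq hBlog hBneg uε
    u'ε huc humild hu'c hu'mild C₁ hC₁ N hu'mod
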